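/- Let k ≥ 2, f_0(y,z) = Σ_{j=0}^{⌊(k+1)/2⌋} (−1)^j ((k+1)!/((k+1−2j)!(j!)²)) y^{k+1−2j} z^j, and f_1 = D·f_0 where D = ((k+2)y² − 2kz)∂/∂y + (3k+4)yz ∂/∂z. Then the Jacobian determinant (∂f_0/∂y)(∂f_1/∂z) − (∂f_0/∂z)(∂f_1/∂y) is a nonzero polynomial; consequently f_0 and f_1 are algebraically independent over ℂ. -/

import Mathlib

/-!
The Jacobian is shown to be nonzero at the point `(y, z) = (0, 1)`, where only the terms of `f₀`
of `y`-degree at most two contribute. Writing `c j` for the coefficients of `f₀`, it takes the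
value `-4m(m+1) (c m)²` for `k = 2m` and `-((m+1)(2m+3) c (m+1))²` for `k = 2m+1`.

Algebraic independence then follows from the Jacobian criterion: differentiating a relation
`F(p, q) = 0` and solving the resulting linear system by Cramer's rule shows that both partial
derivatives of `F` are relations of smaller degree. A relation of minimal degree is therefore
constant, hence zero (in characteristic zero).
-/

open MvPolynomial

/-- The operator `D = ((k+2)y² − 2kz) ∂/∂y + (3k+4) yz ∂/∂z` on `ℂ[y,z]`. -/
noncomputable def D2 (k : ℂ) : MvPolynomial (Fin 2) ℂ → MvPolynomial (Fin 2) ℂ :=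
  fun p => (C (k + 2) * X 0 ^ 2 - C (2 * k) * X 1) * pderiv 0 p
    + C (3 * k + 4) * X 0 * X 1 * pderiv 1 p

/-- `f₀(y,z) = Σⱼ (−1)ʲ (k+1)!/((k+1−2j)!(j!)²) y^{k+1−2j} zʲ`. -/
noncomputable def f0 (k : ℕ) : MvPolynomial (Fin 2) ℂ :=
  ∑ j ∈ Finset.range ((k + 1) / 2 + 1),
    C ((-1) ^ j * (Nat.factorial (k + 1) : ℂ) /
      (Nat.factorial (k + 1 - 2 * j) * (Nat.factorial j) ^ 2)) *
    X 0 ^ (k + 1 - 2 * j) * X 1 ^ j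

open Finset

namespace MvPolynomial

variable {R σ : Type*}

theorem pderiv_aeval [CommSemiring R] {ι : Type*} [Fintype ι] (v : ι → MvPolynomial σ R)
    (i : σ) (F : MvPolynomial ι R) :
    pderiv i (aeval v F) = ∑ j, aeval v (pderiv j F) * pderiv i (v j) := by
  classical
  induction F using MvPolynomial.induction_on with
  | C a => simp
  | add f g hf hg => simp only [map_add, hf, hg, add_mul, sum_add_distrib]
  | mul_X f n hf =>
    simp only [map_mul, aeval_X, Derivation.leibniz, pderiv_X, smul_eq_mul, map_add, hf,
      add_mul, sum_add_distrib, mul_sum, Pi.single_apply]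
    simp [mul_comm, mul_left_comm]

theorem totalDegree_pderiv_lt [CommSemiring R] {i : σ} {f : MvPolynomial σ R}
    (h : pderiv i f ≠ 0) : (pderiv i f).totalDegree < f.totalDegree := by
  classical
  have hdeg : ∀ d ∈ (pderiv i f).support, (d.sum fun _ e => e) < f.totalDegree := fun d hd => by
    have hc : coeff (d + Finsupp.single i 1) f ≠ 0 := fun h0 =>
      mem_support_iff.1 hd (by rw [coeff_pderiv, h0, zero_mul])
    have := le_totalDegree (mem_support_iff.2 hc)
    rw [Finsupp.sum_add_index' (fun _ => rfl) (fun _ _ _ => rfl),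
      Finsupp.sum_single_index rfl] at this
    omega
  obtain ⟨d, hd⟩ := support_nonempty.2 h
  exact (Finset.sup_lt_iff ((Nat.zero_le _).trans_lt (hdeg d hd))).2 hdeg

theorem eq_C_of_pderiv_eq_zero [CommSemiring R] [IsAddTorsionFree R] {f : MvPolynomial σ R}
    (h : ∀ i, pderiv i f = 0) : f = C (coeff 0 f) := by
  classical
  ext m
  rw [coeff_C]
  split_ifs with hm
  · rw [hm]
  obtain ⟨i, hi⟩ : ∃ i, m i ≠ 0 := by
    by_contra! h0
    exact hm (Finsupp.ext h0).symm
  have hsplit : m - Finsupp.single i 1 + Finsupp.single i 1 = m :=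
    tsub_add_cancel_of_le (Finsupp.single_le_iff.2 (Nat.one_le_iff_ne_zero.2 hi))
  have := coeff_pderiv (i := i) f (m - Finsupp.single i 1)
  rw [h i, coeff_zero, hsplit, ← Nat.cast_succ, mul_comm, ← nsmul_eq_mul] at this
  exact (nsmul_eq_zero_iff_right (Nat.succ_ne_zero _)).1 this.symm

variable [CommRing R] [IsDomain R] {p q : MvPolynomial σ R} {i j : σ}

theorem aeval_pderiv_eq_zero_of_jacobian_ne_zero
    (hJ : pderiv i p * pderiv j q - pderiv j p * pderiv i q ≠ 0) {F : MvPolynomial (Fin 2) R}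
    (hF : aeval ![p, q] F = 0) (l : Fin 2) : aeval ![p, q] (pderiv l F) = 0 := by
  have hi := congrArg (pderiv i) hF
  have hj := congrArg (pderiv j) hF
  simp only [pderiv_aeval, Fin.sum_univ_two, Matrix.cons_val_zero, Matrix.cons_val_one,
    map_zero] at hi hj
  revert l
  refine Fin.forall_fin_two.2 ⟨(mul_eq_zero.1 ?_).resolve_right hJ,
    (mul_eq_zero.1 ?_).resolve_right hJ⟩
  · linear_combination pderiv j q * hi - pderiv i q * hj
  · linear_combination pderiv i p * hj - pderiv j p * hi

theorem algebraicIndependent_of_jacobian_ne_zero [CharZero R]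
    (hJ : pderiv i p * pderiv j q - pderiv j p * pderiv i q ≠ 0) :
    AlgebraicIndependent R ![p, q] := by
  rw [algebraicIndependent_iff]
  intro F hF
  induction hn : F.totalDegree using Nat.strong_induction_on generalizing F with
  | _ n ih =>
    have hconst : ∀ l, pderiv l F = 0 := fun l => by
      by_contra hl
      exact hl (ih _ (hn ▸ totalDegree_pderiv_lt hl) _
        (aeval_pderiv_eq_zero_of_jacobian_ne_zero hJ hF l) rfl)
    rw [eq_C_of_pderiv_eq_zero hconst, aeval_C, algebraMap_eq, C_eq_zero] at hF
    rw [eq_C_of_pderiv_eq_zero hconst, hF, map_zero]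

end MvPolynomial

theorem sum_range_ite_sub_two_mul {M : Type*} [AddCommMonoid M] (n r : ℕ) (g : ℕ → M) :
    ∑ j ∈ range (n / 2 + 1), (if n - 2 * j = r then g j else 0) =
      if r ≤ n ∧ Even (n - r) then g ((n - r) / 2) else 0 := by
  have hcond : ∀ j ∈ range (n / 2 + 1),
      (n - 2 * j = r ↔ (r ≤ n ∧ Even (n - r)) ∧ j = (n - r) / 2) := fun j hj => by
    rw [mem_range] at hj
    rw [Nat.even_iff]
    omega
  rw [sum_congr rfl fun j hj => if_congr (hcond j hj) rfl rfl]
  split_ifs with h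
  · simp only [h, true_and]
    rw [sum_ite_eq', if_pos (mem_range.2 (by omega))]
  · simp [h]

section EvalAtZeroOne

variable {R : Type*} [CommRing R] (c : R) (e j : ℕ)

theorem eval_pderiv_zero_term :
    eval ![0, 1] (pderiv 0 (C c * X 0 ^ e * X 1 ^ j)) = if e = 1 then c else 0 := by
  rcases e with _ | _ | e <;> simp [pderiv_X_of_ne (show (1 : Fin 2) ≠ 0 by decide)]

theorem eval_pderiv_one_term :
    eval ![0, 1] (pderiv 1 (C c * X 0 ^ e * X 1 ^ j)) = if e = 0 then c * j else 0 := by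
  rcases e with _ | e <;> simp [pderiv_X_of_ne (show (0 : Fin 2) ≠ 1 by decide)]

theorem eval_pderiv_zero_pderiv_zero_term :
    eval ![0, 1] (pderiv 0 (pderiv 0 (C c * X 0 ^ e * X 1 ^ j))) =
      if e = 2 then c * 2 else 0 := by
  rcases e with _ | _ | _ | e <;> simp [pderiv_X_of_ne (show (1 : Fin 2) ≠ 0 by decide)]

theorem eval_pderiv_one_pderiv_zero_term :
    eval ![0, 1] (pderiv 1 (pderiv 0 (C c * X 0 ^ e * X 1 ^ j))) =
      if e = 1 then c * j else 0 := by
  rcases e with _ | _ | e <;> simp [pderiv_X_of_ne (show (1 : Fin 2) ≠ 0 by decide),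
    pderiv_X_of_ne (show (0 : Fin 2) ≠ 1 by decide)]

end EvalAtZeroOne

theorem eval_pderiv_one_D2 (k : ℂ) (f : MvPolynomial (Fin 2) ℂ) :
    eval ![0, 1] (pderiv 1 (D2 k f)) =
      -(2 * k) * eval ![0, 1] (pderiv 0 f) - 2 * k * eval ![0, 1] (pderiv 1 (pderiv 0 f)) := by
  simp [D2, pderiv_X_of_ne (show (0 : Fin 2) ≠ 1 by decide)]
  ring

theorem eval_pderiv_zero_D2 (k : ℂ) (f : MvPolynomial (Fin 2) ℂ) :
    eval ![0, 1] (pderiv 0 (D2 k f)) =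
      -(2 * k) * eval ![0, 1] (pderiv 0 (pderiv 0 f)) +
        (3 * k + 4) * eval ![0, 1] (pderiv 1 f) := by
  simp [D2, pderiv_X_of_ne (show (1 : Fin 2) ≠ 0 by decide)]
  ring

noncomputable def f0Coeff (k j : ℕ) : ℂ :=
  (-1) ^ j * (Nat.factorial (k + 1) : ℂ) /
    (Nat.factorial (k + 1 - 2 * j) * (Nat.factorial j) ^ 2)

theorem f0_eq_sum (k : ℕ) : f0 k =
    ∑ j ∈ range ((k + 1) / 2 + 1), C (f0Coeff k j) * X 0 ^ (k + 1 - 2 * j) * X 1 ^ j :=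
  rfl

theorem f0Coeff_ne_zero (k j : ℕ) : f0Coeff k j ≠ 0 := by
  simp [f0Coeff, Nat.factorial_ne_zero]

theorem f0Coeff_two_mul_add_one_mul_two (m : ℕ) :
    f0Coeff (2 * m + 1) m * 2 = -((m : ℂ) + 1) ^ 2 * f0Coeff (2 * m + 1) (m + 1) := by
  simp only [f0Coeff, show 2 * m + 1 + 1 - 2 * m = 2 by omega,
    show 2 * m + 1 + 1 - 2 * (m + 1) = 0 by omega, Nat.factorial_zero, Nat.factorial_two,
    Nat.factorial_succ m]
  push_cast
  have : (m.factorial : ℂ) ≠ 0 := Nat.cast_ne_zero.2 (Nat.factorial_ne_zero m)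
  field_simp
  ring

section EvalF0

variable (k : ℕ)

theorem eval_pderiv_zero_f0 :
    eval ![0, 1] (pderiv 0 (f0 k)) = if Even k then f0Coeff k (k / 2) else 0 := by
  simp only [f0_eq_sum, map_sum, eval_pderiv_zero_term]
  simpa using sum_range_ite_sub_two_mul (k + 1) 1 (f0Coeff k)

theorem eval_pderiv_one_f0 : eval ![0, 1] (pderiv 1 (f0 k)) =
    if Even (k + 1) then f0Coeff k ((k + 1) / 2) * ((k + 1) / 2 : ℕ) else 0 := by
  simp only [f0_eq_sum, map_sum, eval_pderiv_one_term]
  simpa using sum_range_ite_sub_two_mul (k + 1) 0 (fun j => f0Coeff k j * j)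

theorem eval_pderiv_zero_pderiv_zero_f0 : eval ![0, 1] (pderiv 0 (pderiv 0 (f0 k))) =
    if 1 ≤ k ∧ Even (k - 1) then f0Coeff k ((k - 1) / 2) * 2 else 0 := by
  simp only [f0_eq_sum, map_sum, eval_pderiv_zero_pderiv_zero_term]
  simpa using sum_range_ite_sub_two_mul (k + 1) 2 (fun j => f0Coeff k j * 2)

theorem eval_pderiv_one_pderiv_zero_f0 : eval ![0, 1] (pderiv 1 (pderiv 0 (f0 k))) =
    if Even k then f0Coeff k (k / 2) * (k / 2 : ℕ) else 0 := by
  simp only [f0_eq_sum, map_sum, eval_pderiv_one_pderiv_zero_term]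
  simpa using sum_range_ite_sub_two_mul (k + 1) 1 (fun j => f0Coeff k j * j)

end EvalF0

theorem eval_jacobian_f0_two_mul (m : ℕ) :
    eval ![0, 1] (pderiv 0 (f0 (2 * m)) * pderiv 1 (D2 ↑(2 * m) (f0 (2 * m)))
      - pderiv 1 (f0 (2 * m)) * pderiv 0 (D2 ↑(2 * m) (f0 (2 * m)))) =
      -(4 * m * (m + 1)) * f0Coeff (2 * m) m ^ 2 := by
  have ha : eval ![0, 1] (pderiv 0 (f0 (2 * m))) = f0Coeff (2 * m) m := by
    rw [eval_pderiv_zero_f0, if_pos (even_two_mul m), Nat.mul_div_cancel_left m two_pos]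
  have hb : eval ![0, 1] (pderiv 1 (f0 (2 * m))) = 0 := by
    rw [eval_pderiv_one_f0, if_neg (Nat.not_even_two_mul_add_one m)]
  have hq : eval ![0, 1] (pderiv 1 (pderiv 0 (f0 (2 * m)))) = f0Coeff (2 * m) m * m := by
    rw [eval_pderiv_one_pderiv_zero_f0, if_pos (even_two_mul m),
      Nat.mul_div_cancel_left m two_pos]
  rw [map_sub, map_mul, map_mul, eval_pderiv_one_D2, eval_pderiv_zero_D2, ha, hb, hq]
  push_cast
  ring

theorem eval_jacobian_f0_two_mul_add_one (m : ℕ) :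
    eval ![0, 1] (pderiv 0 (f0 (2 * m + 1)) * pderiv 1 (D2 ↑(2 * m + 1) (f0 (2 * m + 1)))
      - pderiv 1 (f0 (2 * m + 1)) * pderiv 0 (D2 ↑(2 * m + 1) (f0 (2 * m + 1)))) =
      -(((m : ℂ) + 1) * (2 * m + 3) * f0Coeff (2 * m + 1) (m + 1)) ^ 2 := by
  have ha : eval ![0, 1] (pderiv 0 (f0 (2 * m + 1))) = 0 := by
    rw [eval_pderiv_zero_f0, if_neg (Nat.not_even_two_mul_add_one m)]
  have hb : eval ![0, 1] (pderiv 1 (f0 (2 * m + 1))) =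
      f0Coeff (2 * m + 1) (m + 1) * (m + 1) := by
    rw [eval_pderiv_one_f0, if_pos ⟨m + 1, by ring⟩, show (2 * m + 1 + 1) / 2 = m + 1 by omega]
    push_cast
    rfl
  have hp : eval ![0, 1] (pderiv 0 (pderiv 0 (f0 (2 * m + 1)))) =
      -((m : ℂ) + 1) ^ 2 * f0Coeff (2 * m + 1) (m + 1) := by
    rw [eval_pderiv_zero_pderiv_zero_f0, if_pos (by simp), ← f0Coeff_two_mul_add_one_mul_two]
    simp
  rw [map_sub, map_mul, map_mul, eval_pderiv_one_D2, eval_pderiv_zero_D2, ha, hb, hp]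
  push_cast
  ring

theorem eval_jacobian_f0_ne_zero {k : ℕ} (hk : 2 ≤ k) :
    eval ![0, 1] (pderiv 0 (f0 k) * pderiv 1 (D2 k (f0 k))
      - pderiv 1 (f0 k) * pderiv 0 (D2 k (f0 k))) ≠ 0 := by
  have hc := f0Coeff_ne_zero
  obtain ⟨m, rfl | rfl⟩ := Nat.even_or_odd' k
  · have hm : (m : ℂ) ≠ 0 := Nat.cast_ne_zero.2 (by omega)
    rw [eval_jacobian_f0_two_mul]
    simp [hm, hc, Nat.cast_add_one_ne_zero]
  · have hm : (2 * m + 3 : ℂ) ≠ 0 := by exact_mod_cast (by omega : 2 * m + 3 ≠ 0)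
    rw [eval_jacobian_f0_two_mul_add_one]
    simp [hm, hc, Nat.cast_add_one_ne_zero]

theorem stmt_10 (k : ℕ) (hk : 2 ≤ k) :
    pderiv 0 (f0 k) * pderiv 1 (D2 (k : ℂ) (f0 k))
      - pderiv 1 (f0 k) * pderiv 0 (D2 (k : ℂ) (f0 k)) ≠ 0 ∧
    AlgebraicIndependent ℂ ![f0 k, D2 (k : ℂ) (f0 k)] := by
  have hJ : pderiv 0 (f0 k) * pderiv 1 (D2 (k : ℂ) (f0 k))
      - pderiv 1 (f0 k) * pderiv 0 (D2 (k : ℂ) (f0 k)) ≠ 0 := fun h =>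
    eval_jacobian_f0_ne_zero hk (by rw [h, map_zero])
  exact ⟨hJ, algebraicIndependent_of_jacobian_ne_zero hJ⟩
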